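/- Let ω be a word of positive integers, let P be the insertion tableau obtained by applying the RSK correspondence to ω, and let λ be the shape of P. Then for every i ≥ 1, P has an (i,i+1)-strip of length λ_1 if and only if ω has an (i,i+1)-subsequence of length λ_1. -/

import Mathlib

open scoped Classical

/-! ### Words and conditions (i)-(iii) -/

/-- An `(r+1)`-ary word of length `g`: every letter lies in `{1, …, r+1}`. -/
def IsWord (g r : ℕ) (w : Fin g → ℕ) : Prop :=
  ∀ j, 1 ≤ w j ∧ w j ≤ r + 1

/-- Condition (i): a collection of at least `g + r - d` pairwise disjoint decreasing
subsequences, each of length `r + 1`. -/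
def CondI (g r d : ℕ) (w : Fin g → ℕ) : Prop :=
  ∃ S : Fin (g + r - d) → Fin (r + 1) → Fin g,
    (∀ k, StrictMono (S k) ∧ StrictAnti (w ∘ S k)) ∧
      ∀ k k', k ≠ k' → ∀ a b, S k a ≠ S k' b

/-- Condition (ii): no nondecreasing subsequence of length greater than `d / r`. -/
def CondII (g r d : ℕ) (w : Fin g → ℕ) : Prop :=
  ∀ m, d / r < m → ¬∃ js : Fin m → Fin g, StrictMono js ∧ Monotone (w ∘ js)

/-- Condition (iii): for every `i ∈ {1, …, r}`, no `(i,i+1)`-subsequence (nondecreasing,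
all letters equal to `i` or `i+1`) of length `d / r`. -/
def CondIII (g r d : ℕ) (w : Fin g → ℕ) : Prop :=
  ∀ i, 1 ≤ i → i ≤ r →
    ¬∃ js : Fin (d / r) → Fin g,
        StrictMono js ∧ Monotone (w ∘ js) ∧ ∀ a, w (js a) = i ∨ w (js a) = i + 1

/-- A word satisfies conditions (i)–(iii) for parameters `(g, r, d)`. -/
def SatisfiesConds (g r d : ℕ) (w : Fin g → ℕ) : Prop :=
  CondI g r d w ∧ CondII g r d w ∧ CondIII g r d w

/-- The number of `(r+1)`-ary words of length `g` satisfying conditions (i)–(iii). -/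
noncomputable def wordCount (g r d : ℕ) : ℕ :=
  ((Fintype.piFinset fun _ : Fin g => Finset.Icc 1 (r + 1)).filter fun w =>
      SatisfiesConds g r d w).card

/-! ### Tableaux, encoded as functions `ℕ → ℕ → ℕ` (entry `0` = empty box) -/

/-- A semistandard Young tableau: support is a Young diagram (rows left-justified,
columns top-justified), rows weakly increase, columns strictly increase.
Entries are positive; the value `0` marks an empty box. -/
def IsSSYT (T : ℕ → ℕ → ℕ) : Prop :=
  (∀ i j, T i (j + 1) ≠ 0 → T i j ≠ 0) ∧
  (∀ i j, T (i + 1) j ≠ 0 → T i j ≠ 0) ∧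
  (∀ i j, T i (j + 1) ≠ 0 → T i j ≤ T i (j + 1)) ∧
  (∀ i j, T (i + 1) j ≠ 0 → T i j < T (i + 1) j)

/-- The number of boxes of a tableau. -/
noncomputable def tabSize (T : ℕ → ℕ → ℕ) : ℕ :=
  {p : ℕ × ℕ | T p.1 p.2 ≠ 0}.ncard

/-- `T` has an `(i,i+1)`-strip of length `ℓ`: one box in each of the first `ℓ` columns
(`s j` = row of the box in column `j`), boxes weakly move up from left to right
(a box in a column strictly to the left never lies in a row strictly above a box in a
column to its right), every box is filled with `i` or `i+1`, and every entry `i` lies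
in a column strictly to the left of every entry `i+1`. -/
def HasIStrip (T : ℕ → ℕ → ℕ) (i ℓ : ℕ) : Prop :=
  ∃ s : ℕ → ℕ,
    (∀ j, j < ℓ → T (s j) j ≠ 0) ∧
    (∀ j j', j < j' → j' < ℓ → s j' ≤ s j) ∧
    (∀ j, j < ℓ → T (s j) j = i ∨ T (s j) j = i + 1) ∧
    (∀ j j', j < ℓ → j' < ℓ → T (s j) j = i → T (s j') j' = i + 1 → j < j')

/-- `SSYT_C(g,r,d)` (with `n = d + d/r + 1 - g`): SSYT of size `(d-r)(r+1) - rg`,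
entries in `{1, …, r+1}`, width at most `n - r - 1`, at least `d - g - r` columns of
height `r + 1`, and no `(i,i+1)`-strip of length `n - r - 1` for any `i ∈ {1, …, r}`. -/
def SSYT_C (g r d n : ℕ) : Set (ℕ → ℕ → ℕ) :=
  {T | IsSSYT T ∧ tabSize T = (d - r) * (r + 1) - r * g ∧
    (∀ i j, T i j ≠ 0 → T i j ≤ r + 1) ∧
    T 0 (n - r - 1) = 0 ∧
    (∀ j, j < d - g - r → T r j ≠ 0) ∧
    ∀ i, 1 ≤ i → i ≤ r → ¬HasIStrip T i (n - r - 1)}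

/-- `SSYT_AC(g,r,d)`: SSYT of size `g`, entries in `{1, …, r+1}`, width at most `d / r`,
at least `g + r - d` columns of height `r + 1`, and no `(i,i+1)`-strip of length `d / r`
for any `i ∈ {1, …, r}`. -/
def SSYT_AC (g r d : ℕ) : Set (ℕ → ℕ → ℕ) :=
  {T | IsSSYT T ∧ tabSize T = g ∧
    (∀ i j, T i j ≠ 0 → T i j ≤ r + 1) ∧
    T 0 (d / r) = 0 ∧
    (∀ j, j < g + r - d → T r j ≠ 0) ∧
    ∀ i, 1 ≤ i → i ≤ r → ¬HasIStrip T i (d / r)}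

/-- The width adjustment `ψ`: if `d < g + r`, add `g + r - d` full columns of height
`r + 1` (filled with `1, …, r+1`) on the left; if `d > g + r`, remove the leftmost
`d - g - r` columns; if `d = g + r`, do nothing. -/
def psi (g r d : ℕ) (B : ℕ → ℕ → ℕ) : ℕ → ℕ → ℕ :=
  if d ≤ g + r then
    fun i j =>
      if j < g + r - d then (if i < r + 1 then i + 1 else 0) else B i (j - (g + r - d))
  else fun i j => B i (j + (d - (g + r)))

/-- A `180°`-rotated and conjugated SSYT of content `(r, …, r)` (each of `1, …, g`
appearing exactly `r` times) and height at most `r + 1`.  The row index `i` runs over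
`0, …, r` (row `i` is the row labelled `i + 1`) and the column index `j` counts boxes
of a row starting from the *right* end.  Rows are right-justified and strictly increase
from right to left; columns are bottom-justified and weakly decrease from top to bottom. -/
def IsTrSSYT (g r : ℕ) (R : ℕ → ℕ → ℕ) : Prop :=
  (∀ i j, R i (j + 1) ≠ 0 → R i j ≠ 0) ∧
  (∀ i j, i < r → R i j ≠ 0 → R (i + 1) j ≠ 0) ∧
  (∀ i j, r + 1 ≤ i → R i j = 0) ∧
  (∀ i j, R i (j + 1) ≠ 0 → R i j < R i (j + 1)) ∧
  (∀ i j, R i j ≠ 0 → R (i + 1) j ≠ 0 → R (i + 1) j ≤ R i j) ∧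
  (∀ i j, R i j ≠ 0 → R i j ≤ g) ∧
  (∀ k, 1 ≤ k → k ≤ g → {p : ℕ × ℕ | R p.1 p.2 = k}.ncard = r)

/-- The purple tableau `φ(R)`: for `i = 1, …, g` in order, place a box labelled `i` as
far to the left as possible in the unique row among `1, …, r+1` not containing `i` in
`R`.  Equivalently, the entry of `φ(R)` in row `i`, column `j` is the `(j+1)`-st
smallest value of `{1, …, g}` not appearing in row `i` of `R`. -/
def phiMap (g r : ℕ) (R : ℕ → ℕ → ℕ) : ℕ → ℕ → ℕ := fun i j =>
  if i < r + 1 then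
    (((Finset.Icc 1 g).filter fun k => ∀ l ∈ Finset.range g, R i l ≠ k).sort (· ≤ ·)).getD j 0
  else 0

/-- A standard Young tableau of size `g`: a semistandard tableau with strictly
increasing rows whose entries are exactly `1, …, g`, each appearing once. -/
def IsSYT (g : ℕ) (Q : ℕ → ℕ → ℕ) : Prop :=
  IsSSYT Q ∧ (∀ i j, Q i (j + 1) ≠ 0 → Q i j < Q i (j + 1)) ∧
  (∀ i j, Q i j ≠ 0 → Q i j ≤ g) ∧
  (∀ k, 1 ≤ k → k ≤ g → {p : ℕ × ℕ | Q p.1 p.2 = k}.ncard = 1)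

/-- Two tableaux have the same shape. -/
def SameShape (P Q : ℕ → ℕ → ℕ) : Prop :=
  ∀ i j, P i j ≠ 0 ↔ Q i j ≠ 0

/-- An L-tableau with parameters `(g, r, d)`, encoded as the pair of its blue tableau
`B` (in grid coordinates: row `i ∈ {0, …, r}` from the top, column `j ∈ {0, …, d-r-1}`
from the left) and its red tableau `R` (row `i ∈ {0, …, r}` from the top, column `j`
counted from the right edge of the grid).  The blue entries lie in `{1, …, r+1}`, are
top- and left-justified and form an SSYT; the red entries lie in `{1, …, g}`, each
appearing exactly `r` times, are bottom- and right-justified and form a rotated,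
conjugated SSYT; together they fill the `(r+1) × (d-r)` grid (the grid cell `(i, j)`
is blue if and only if it is not red, i.e. `R i (d - r - 1 - j) = 0`). -/
def IsLTableau (g r d : ℕ) (B R : ℕ → ℕ → ℕ) : Prop :=
  IsSSYT B ∧ (∀ i j, B i j ≠ 0 → B i j ≤ r + 1) ∧
  IsTrSSYT g r R ∧
  (∀ i j, d - r ≤ j → R i j = 0) ∧
  (∀ i j, r + 1 ≤ i ∨ d - r ≤ j → B i j = 0) ∧
  (∀ i j, i < r + 1 → j < d - r → (B i j ≠ 0 ↔ R i (d - r - 1 - j) = 0))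

/-- The set `𝓛ʳ_{g,n,d}` of L-tableaux: the blue tableau is supported in the leftmost
`n - r - 1` columns and has no `(i,i+1)`-strip of length `n - r - 1` for `i ∈ {1, …, r}`. -/
def LSet (g r d n : ℕ) : Set ((ℕ → ℕ → ℕ) × (ℕ → ℕ → ℕ)) :=
  {BR | IsLTableau g r d BR.1 BR.2 ∧
    (∀ i j, n - r - 1 ≤ j → BR.1 i j = 0) ∧
    ∀ i, 1 ≤ i → i ≤ r → ¬HasIStrip BR.1 i (n - r - 1)}

/-- The set `𝒯ʳ_{g,n,d}` of pairs `(P, Q)` of the same shape with `P ∈ SSYT_AC(g,r,d)`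
and `Q` a standard Young tableau. -/
def TSet (g r d : ℕ) : Set ((ℕ → ℕ → ℕ) × (ℕ → ℕ → ℕ)) :=
  {PQ | PQ.1 ∈ SSYT_AC g r d ∧ IsSYT g PQ.2 ∧ SameShape PQ.1 PQ.2}

/-! ### Words as lists, Knuth equivalence, reading words, RSK -/

/-- The list `s` is an `(i,i+1)`-subsequence of length `ℓ` of the word `w`:
a nondecreasing subsequence all of whose letters equal `i` or `i + 1`. -/
def HasIISubseqL (w : List ℕ) (i ℓ : ℕ) : Prop :=
  ∃ s : List ℕ, s.Sublist w ∧ s.length = ℓ ∧ s.Pairwise (· ≤ ·) ∧ ∀ x ∈ s, x = i ∨ x = i + 1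

/-- Elementary Knuth transformations: `…acb… ↦ …cab…` for `a ≤ b < c`, and
`…bac… ↦ …bca…` for `a < b ≤ c`. -/
inductive KnuthStep : List ℕ → List ℕ → Prop
  | swap1 (u v : List ℕ) (a b c : ℕ) (h1 : a ≤ b) (h2 : b < c) :
      KnuthStep (u ++ a :: c :: b :: v) (u ++ c :: a :: b :: v)
  | swap2 (u v : List ℕ) (a b c : ℕ) (h1 : a < b) (h2 : b ≤ c) :
      KnuthStep (u ++ b :: a :: c :: v) (u ++ b :: c :: a :: v)

/-- Knuth equivalence: the equivalence relation generated by the elementary Knuth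
transformations. -/
def KnuthEquiv : List ℕ → List ℕ → Prop :=
  Relation.EqvGen KnuthStep

/-- View a tableau given as a list of rows as a function `ℕ → ℕ → ℕ`. -/
def tabFun (P : List (List ℕ)) : ℕ → ℕ → ℕ := fun i j => (P.getD i []).getD j 0

/-- The reading word of a tableau: concatenate the rows from bottom to top,
each row read from left to right. -/
def readingWord (P : List (List ℕ)) : List ℕ :=
  P.reverse.flatten

/-- A semistandard Young tableau presented as its list of rows (top to bottom):
rows are nonempty, weakly increasing, with positive entries; row lengths weakly
decrease; columns strictly increase. -/
def IsSSYTRows (P : List (List ℕ)) : Prop :=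
  (∀ row ∈ P, row ≠ [] ∧ row.Pairwise (· ≤ ·) ∧ ∀ x ∈ row, 0 < x) ∧
  ∀ i, i + 1 < P.length →
    (P.getD (i + 1) []).length ≤ (P.getD i []).length ∧
    ∀ j, j < (P.getD (i + 1) []).length →
      (P.getD i []).getD j 0 < (P.getD (i + 1) []).getD j 0

/-- Schensted insertion of `x` into a row: replace the leftmost entry strictly larger
than `x` (returning it as bumped), or append `x` at the end if no such entry exists. -/
def rowInsert (x : ℕ) : List ℕ → List ℕ × Option ℕ
  | [] => ([x], none)
  | y :: ys =>
    if y ≤ x then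
      let p := rowInsert x ys
      (y :: p.1, p.2)
    else (x :: ys, some y)

/-- Schensted row insertion of `x` into a tableau (given as its list of rows). -/
def tabInsert (x : ℕ) : List (List ℕ) → List (List ℕ)
  | [] => [[x]]
  | row :: rest =>
    match rowInsert x row with
    | (row', none) => row' :: rest
    | (row', some y) => row' :: tabInsert y rest

/-- The insertion tableau `P` of a word under the RSK correspondence. -/
def insertTab (w : List ℕ) : List (List ℕ) :=
  w.foldl (fun t x => tabInsert x t) []

/-- The recording tableau `Q` of a word under the RSK correspondence: the entry in box
`(i, j)` is the step at which that box was created during the insertion process. -/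
def recQ (w : List ℕ) : ℕ → ℕ → ℕ := fun i j =>
  (((List.range (w.length + 1)).find? fun k =>
      decide (j < ((insertTab (w.take k)).getD i []).length)).getD 0)

/-- The RSK correspondence, sending a word to the pair (insertion tableau, recording
tableau), both viewed as functions `ℕ → ℕ → ℕ`. -/
def RSKmap (w : List ℕ) : (ℕ → ℕ → ℕ) × (ℕ → ℕ → ℕ) :=
  (tabFun (insertTab w), recQ w)

lemma rowInsert_spec (x : ℕ) (R : List ℕ) :
    ((∀ z ∈ R, z ≤ x) ∧ rowInsert x R = (R ++ [x], none))
    ∨ ∃ p, p < R.length ∧ x < R.getD p 0 ∧ (∀ k, k < p → R.getD k 0 ≤ x) ∧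
        rowInsert x R = (R.set p x, some (R.getD p 0)) := by
  induction R with
  | nil => left; exact ⟨by simp, rfl⟩
  | cons y ys ih =>
    by_cases hy : y ≤ x
    · rcases ih with ⟨hall, heq⟩ | ⟨p, hp, hx, hk, heq⟩
      · left
        refine ⟨by simpa [hy] using hall, ?_⟩
        simp [rowInsert, hy, heq]
      · right
        refine ⟨p + 1, by simpa using hp, by simpa using hx, ?_, ?_⟩
        · intro k hk'
          cases k with
          | zero => simpa using hy
          | succ k => simpa using hk k (by omega)
        · simp [rowInsert, hy, heq]
    · right
      refine ⟨0, by simp, by simpa using (by omega : x < y), by omega, ?_⟩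
      simp [rowInsert, hy]

lemma sorted_getD_mono {R : List ℕ} (h : R.Pairwise (· ≤ ·)) {a b : ℕ} (hab : a ≤ b)
    (hb : b < R.length) : R.getD a 0 ≤ R.getD b 0 := by
  rcases eq_or_lt_of_le hab with rfl | hab'
  · rfl
  · rw [List.getD_eq_getElem _ _ (lt_of_le_of_lt hab hb), List.getD_eq_getElem _ _ hb]
    exact List.pairwise_iff_getElem.1 h a b _ _ hab'

lemma rowInsert_fst_sorted {R : List ℕ} (h : R.Pairwise (· ≤ ·)) (x : ℕ) :
    ((rowInsert x R).1).Pairwise (· ≤ ·) := by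
  rcases rowInsert_spec x R with ⟨hall, heq⟩ | ⟨p, hp, hx, hk, heq⟩
  · rw [heq]
    simp only [List.pairwise_append]
    exact ⟨h, by simp, by simpa using hall⟩
  · rw [heq]
    simp only [List.pairwise_iff_getElem] at h ⊢
    intro a b ha hb hab
    simp only [List.length_set] at ha hb
    rw [List.getElem_set, List.getElem_set]
    have hxp : x < R[p] := by rw [List.getD_eq_getElem _ _ hp] at hx; exact hx
    by_cases hpa : p = a <;> by_cases hpb : p = b
    · rw [if_pos hpa, if_pos hpb]
    · rw [if_pos hpa, if_neg hpb]
      have hxa : x < R[a] := by subst hpa; exact hxp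
      exact le_of_lt (lt_of_lt_of_le hxa (h a b ha hb hab))
    · rw [if_neg hpa, if_pos hpb]
      have := hk a (by omega)
      rw [List.getD_eq_getElem _ _ ha] at this
      exact this
    · rw [if_neg hpa, if_neg hpb]
      exact h a b ha hb hab

lemma rowInsert_mem {R : List ℕ} {x z : ℕ} (hz : z ∈ (rowInsert x R).1) : z ∈ R ∨ z = x := by
  rcases rowInsert_spec x R with ⟨_, heq⟩ | ⟨p, _, _, _, heq⟩ <;> rw [heq] at hz
  · simpa using hz
  · exact List.mem_or_eq_of_mem_set hz

lemma rowInsert_fst_length_some {R : List ℕ} {x y : ℕ} (h : (rowInsert x R).2 = some y) :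
    ((rowInsert x R).1).length = R.length := by
  rcases rowInsert_spec x R with ⟨_, heq⟩ | ⟨p, _, _, _, heq⟩ <;> rw [heq] at h ⊢ <;> simp_all

lemma KnuthEquiv.refl (l : List ℕ) : KnuthEquiv l l := Relation.EqvGen.refl l

lemma KnuthEquiv.symm' {l₁ l₂ : List ℕ} (h : KnuthEquiv l₁ l₂) : KnuthEquiv l₂ l₁ :=
  Relation.EqvGen.symm _ _ h

lemma KnuthEquiv.trans' {l₁ l₂ l₃ : List ℕ} (h : KnuthEquiv l₁ l₂) (h' : KnuthEquiv l₂ l₃) :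
    KnuthEquiv l₁ l₃ := Relation.EqvGen.trans _ _ _ h h'

lemma KnuthStep.context {l₁ l₂ : List ℕ} (u v : List ℕ) (h : KnuthStep l₁ l₂) :
    KnuthStep (u ++ l₁ ++ v) (u ++ l₂ ++ v) := by
  cases h with
  | swap1 u' v' a b c h1 h2 =>
    have := KnuthStep.swap1 (u ++ u') (v' ++ v) a b c h1 h2
    simpa [List.append_assoc] using this
  | swap2 u' v' a b c h1 h2 =>
    have := KnuthStep.swap2 (u ++ u') (v' ++ v) a b c h1 h2
    simpa [List.append_assoc] using this

lemma KnuthEquiv.context {l₁ l₂ : List ℕ} (u v : List ℕ) (h : KnuthEquiv l₁ l₂) :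
    KnuthEquiv (u ++ l₁ ++ v) (u ++ l₂ ++ v) := by
  induction h with
  | rel x y hxy => exact Relation.EqvGen.rel _ _ (hxy.context u v)
  | refl x => exact Relation.EqvGen.refl _
  | symm x y _ ih => exact Relation.EqvGen.symm _ _ ih
  | trans x y z _ _ ih1 ih2 => exact Relation.EqvGen.trans _ _ _ ih1 ih2

lemma knuth_bubble_low : ∀ (C : List ℕ) (b x : ℕ), x < b → (∀ z ∈ C, b ≤ z) →
    C.Pairwise (· ≤ ·) → KnuthEquiv (b :: (C ++ [x])) (b :: x :: C) := by
  intro C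
  induction C with
  | nil => intro b x _ _ _; exact KnuthEquiv.refl _
  | cons c C' ih =>
    intro b x hxb hall hsort
    have hbc : b ≤ c := hall c (by simp)
    have h1 : KnuthEquiv (c :: (C' ++ [x])) (c :: x :: C') :=
      ih c x (lt_of_lt_of_le hxb hbc) (fun z hz => List.rel_of_pairwise_cons hsort hz)
        (List.pairwise_cons.1 hsort).2
    have h2 : KnuthEquiv (b :: c :: (C' ++ [x])) (b :: c :: x :: C') := by
      have := h1.context [b] []
      simpa using this
    refine h2.trans' ?_
    -- b :: c :: x :: C' → b :: x :: c :: C'  via swap2 (b a c form) backwards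
    have step : KnuthStep ([] ++ b :: x :: c :: C') ([] ++ b :: c :: x :: C') :=
      KnuthStep.swap2 [] C' x b c hxb hbc
    exact KnuthEquiv.symm' (Relation.EqvGen.rel _ _ step)

lemma knuth_rowInsert : ∀ (R : List ℕ), R.Pairwise (· ≤ ·) → ∀ (x y : ℕ),
    (rowInsert x R).2 = some y → KnuthEquiv (R ++ [x]) (y :: (rowInsert x R).1) := by
  intro R
  induction R with
  | nil => intro _ x y h; simp [rowInsert] at h
  | cons a ys ih =>
    intro hsort x y h
    by_cases ha : a ≤ x
    · -- recursive case
      have hys : ys.Pairwise (· ≤ ·) := (List.pairwise_cons.1 hsort).2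
      have hrec : rowInsert x (a :: ys) = (a :: (rowInsert x ys).1, (rowInsert x ys).2) := by
        simp [rowInsert, ha]
      rw [hrec] at h ⊢
      simp only at h ⊢
      have ihh := ih hys x y h
      have h1 : KnuthEquiv (a :: (ys ++ [x])) (a :: y :: (rowInsert x ys).1) := by
        have := ihh.context [a] []
        simpa using this
      rcases rowInsert_spec x ys with ⟨_, heq⟩ | ⟨p, hp, hxp, hkp, heq⟩
      · rw [heq] at h; simp at h
      · rw [heq] at h h1 ⊢
        simp only at h h1 ⊢
        injection h with h
        subst h
        obtain ⟨w, ys', rfl⟩ : ∃ w ys', ys = w :: ys' := by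
          cases ys with
          | nil => simp at hp
          | cons w ys' => exact ⟨w, ys', rfl⟩
        have haw : a ≤ w := (List.pairwise_cons.1 hsort).1 w (by simp)
        set y := (w :: ys').getD p 0 with hy
        obtain ⟨b, v, hbv, hab, hby⟩ : ∃ b v, (w :: ys').set p x = b :: v ∧ a ≤ b ∧ b < y := by
          cases p with
          | zero =>
            refine ⟨x, ys', by simp, ha, ?_⟩
            simpa [hy] using hxp
          | succ q =>
            refine ⟨w, ys'.set q x, by simp, haw, ?_⟩
            have hw : w ≤ x := by simpa using hkp 0 (by omega)
            exact lt_of_le_of_lt hw hxp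
        rw [hbv] at h1 ⊢
        have step : KnuthStep ([] ++ a :: y :: b :: v) ([] ++ y :: a :: b :: v) :=
          KnuthStep.swap1 [] v a b y hab hby
        refine KnuthEquiv.trans' ?_ (Relation.EqvGen.rel _ _ step)
        simpa using h1
    · -- immediate bump: y = a, result x :: ys
      have hrec : rowInsert x (a :: ys) = (x :: ys, some a) := by simp [rowInsert, ha]
      rw [hrec] at h ⊢
      simp only at h ⊢
      injection h with h; subst h
      have : KnuthEquiv (a :: (ys ++ [x])) (a :: x :: ys) :=
        knuth_bubble_low ys a x (by omega) (fun z hz => (List.pairwise_cons.1 hsort).1 z hz)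
          (List.pairwise_cons.1 hsort).2
      simpa using this

lemma readingWord_cons (row : List ℕ) (rest : List (List ℕ)) :
    readingWord (row :: rest) = readingWord rest ++ row := by
  simp [readingWord]

lemma rowInsert_none_eq {x : ℕ} {R row' : List ℕ} (h : rowInsert x R = (row', none)) :
    row' = R ++ [x] := by
  rcases rowInsert_spec x R with ⟨_, heq⟩ | ⟨p, _, _, _, heq⟩ <;> rw [heq] at h <;>
    simp_all

lemma tabInsert_rows_sorted : ∀ (P : List (List ℕ)) (x : ℕ),
    (∀ row ∈ P, row.Pairwise (· ≤ ·)) → ∀ row ∈ tabInsert x P, row.Pairwise (· ≤ ·) := by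
  intro P
  induction P with
  | nil => intro x _ row hrow; simp [tabInsert] at hrow; simp [hrow]
  | cons r rest ih =>
    intro x hP row hrow
    rcases hrr : rowInsert x r with ⟨row', o⟩
    cases o with
    | none =>
      rw [show tabInsert x (r :: rest) = row' :: rest by rw [tabInsert, hrr]] at hrow
      rcases List.mem_cons.1 hrow with rfl | hrow
      · have := rowInsert_fst_sorted (hP r (by simp)) x
        rwa [hrr] at this
      · exact hP row (by simp [hrow])
    | some y =>
      rw [show tabInsert x (r :: rest) = row' :: tabInsert y rest by rw [tabInsert, hrr]] at hrow
      rcases List.mem_cons.1 hrow with rfl | hrow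
      · have := rowInsert_fst_sorted (hP r (by simp)) x
        rwa [hrr] at this
      · exact ih y (fun q hq => hP q (by simp [hq])) row hrow

lemma knuth_tabInsert : ∀ (P : List (List ℕ)), (∀ row ∈ P, row.Pairwise (· ≤ ·)) → ∀ (x : ℕ),
    KnuthEquiv (readingWord P ++ [x]) (readingWord (tabInsert x P)) := by
  intro P
  induction P with
  | nil => intro _ x; simp [tabInsert, readingWord]; exact KnuthEquiv.refl _
  | cons row rest ih =>
    intro hP x
    rcases hrr : rowInsert x row with ⟨row', o⟩
    cases o with
    | none =>
      rw [show tabInsert x (row :: rest) = row' :: rest by rw [tabInsert, hrr]]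
      rw [readingWord_cons, readingWord_cons, rowInsert_none_eq hrr]
      simp only [List.append_assoc]
      exact KnuthEquiv.refl _
    | some y =>
      rw [show tabInsert x (row :: rest) = row' :: tabInsert y rest by rw [tabInsert, hrr]]
      rw [readingWord_cons, readingWord_cons]
      have hrow : row.Pairwise (· ≤ ·) := hP row (by simp)
      have h1 : KnuthEquiv (row ++ [x]) (y :: row') := by
        have := knuth_rowInsert row hrow x y (by rw [hrr])
        rwa [hrr] at this
      have h2 : KnuthEquiv (readingWord rest ++ (row ++ [x]))
          (readingWord rest ++ (y :: row')) := by
        have := h1.context (readingWord rest) []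
        simpa using this
      have h3 : KnuthEquiv ((readingWord rest ++ [y]) ++ row')
          (readingWord (tabInsert y rest) ++ row') := by
        have := (ih (fun q hq => hP q (by simp [hq])) y).context [] row'
        simpa using this
      refine KnuthEquiv.trans' ?_ h3
      refine KnuthEquiv.trans' (by simp [List.append_assoc]; exact KnuthEquiv.refl _) ?_
      refine KnuthEquiv.trans' h2 ?_
      simp [List.append_assoc]
      exact KnuthEquiv.refl _

lemma insertTab_rows_sorted (w : List ℕ) : ∀ row ∈ insertTab w, row.Pairwise (· ≤ ·) := by
  induction w using List.reverseRecOn with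
  | nil => simp [insertTab]
  | append_singleton w x ih =>
    rw [insertTab, List.foldl_append]
    exact tabInsert_rows_sorted _ x ih

lemma knuth_insertTab (w : List ℕ) : KnuthEquiv w (readingWord (insertTab w)) := by
  induction w using List.reverseRecOn with
  | nil => exact KnuthEquiv.refl _
  | append_singleton w x ih =>
    have h1 : KnuthEquiv (w ++ [x]) (readingWord (insertTab w) ++ [x]) := by
      have := ih.context [] [x]
      simpa using this
    refine h1.trans' ?_
    rw [show insertTab (w ++ [x]) = tabInsert x (insertTab w) by
      rw [insertTab, List.foldl_append]; rfl]
    exact knuth_tabInsert _ (insertTab_rows_sorted w) x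

lemma sublist_triple {α : Type*} {s : List α} {p q r : α} (h : s.Sublist [p, q, r]) :
    s = [] ∨ s = [p] ∨ s = [q] ∨ s = [r] ∨ s = [p, q] ∨ s = [p, r] ∨ s = [q, r] ∨
      s = [p, q, r] := by
  rcases List.sublist_cons_iff.1 h with h | ⟨t, rfl, ht⟩
  · rcases List.sublist_cons_iff.1 h with h | ⟨t, rfl, ht⟩
    · rcases List.sublist_cons_iff.1 h with h | ⟨t, rfl, ht⟩
      · simp [List.sublist_nil.1 h]
      · simp [List.sublist_nil.1 ht]
    · rcases List.sublist_cons_iff.1 ht with h | ⟨t', rfl, ht'⟩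
      · simp [List.sublist_nil.1 h]
      · simp [List.sublist_nil.1 ht']
  · rcases List.sublist_cons_iff.1 ht with h | ⟨t', rfl, ht'⟩
    · rcases List.sublist_cons_iff.1 h with h | ⟨t', rfl, ht'⟩
      · simp [List.sublist_nil.1 h]
      · simp [List.sublist_nil.1 ht']
    · rcases List.sublist_cons_iff.1 ht' with h | ⟨t'', rfl, ht''⟩
      · simp [List.sublist_nil.1 h]
      · simp [List.sublist_nil.1 ht'']

lemma hasII_rebuild {i ℓ : ℕ} {u v s₁ s₃ : List ℕ} (m' s₂' : List ℕ)
    (h1 : s₁.Sublist u) (h2 : s₂'.Sublist m') (h3 : s₃.Sublist v)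
    (hlen : (s₁ ++ (s₂' ++ s₃)).length = ℓ)
    (hs : (s₁ ++ (s₂' ++ s₃)).Pairwise (· ≤ ·))
    (hl : ∀ x ∈ s₁ ++ (s₂' ++ s₃), x = i ∨ x = i + 1) :
    HasIISubseqL (u ++ (m' ++ v)) i ℓ :=
  ⟨_, h1.append (h2.append h3), hlen, hs, hl⟩

lemma swap1_fwd {u v : List ℕ} {a b c i ℓ : ℕ} (h1 : a ≤ b) (h2 : b < c)
    (h : HasIISubseqL (u ++ a :: c :: b :: v) i ℓ) :
    HasIISubseqL (u ++ c :: a :: b :: v) i ℓ := by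
  obtain ⟨s, hsub, hlen, hsort, hlet⟩ := h
  obtain ⟨s₁, s₂₃, rfl, hs1, h23⟩ := List.sublist_append_iff.1 hsub
  obtain ⟨s₂, s₃, rfl, hs2, hs3⟩ :=
    List.sublist_append_iff.1 (show s₂₃.Sublist ([a, c, b] ++ v) from h23)
  have hp := List.pairwise_append.1 hsort
  have hp2 := List.pairwise_append.1 hp.2.1
  have goal_eq : u ++ c :: a :: b :: v = u ++ ([c, a, b] ++ v) := rfl
  rw [goal_eq]
  rcases sublist_triple hs2 with rfl | rfl | rfl | rfl | rfl | rfl | rfl | rfl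
  · exact hasII_rebuild _ [] hs1 (by simp) hs3 hlen hsort hlet
  · exact hasII_rebuild _ [a] hs1 (by simp) hs3 hlen hsort hlet
  · exact hasII_rebuild _ [c] hs1 (by simp) hs3 hlen hsort hlet
  · exact hasII_rebuild _ [b] hs1 (by simp) hs3 hlen hsort hlet
  · -- s₂ = [a, c] : replace by [a, b]
    have hai : a = i ∨ a = i + 1 := hlet a (by simp)
    have hci : c = i ∨ c = i + 1 := hlet c (by simp)
    have hbi : b = i := by omega
    refine hasII_rebuild _ [a, b] hs1 ?_ hs3 (by simpa using hlen) ?_ ?_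
    · exact (List.Sublist.cons c (by exact (List.Sublist.refl _))).trans
        (by exact List.Sublist.refl _)
    · refine List.pairwise_append.2 ⟨hp.1, List.pairwise_append.2 ⟨?_, hp2.2.1, ?_⟩, ?_⟩
      · simp [h1]
      · intro x hx y hy
        rcases List.mem_pair.1 hx with rfl | rfl
        · exact hp2.2.2 x (by simp) y hy
        · exact le_of_lt (lt_of_lt_of_le h2 (hp2.2.2 c (by simp) y hy))
      · intro x hx y hy
        rcases List.mem_append.1 hy with hy' | hy'
        · rcases List.mem_pair.1 hy' with rfl | rfl
          · exact hp.2.2 x hx y (by simp)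
          · exact le_trans (hp.2.2 x hx a (by simp)) h1
        · exact hp.2.2 x hx y (by simp [hy'])
    · intro x hx
      rcases List.mem_append.1 hx with hx' | hx'
      · exact hlet x (by simp [hx'])
      · rcases List.mem_append.1 hx' with hx'' | hx''
        · rcases List.mem_pair.1 hx'' with rfl | rfl
          · exact hlet x (by simp)
          · left; exact hbi
        · exact hlet x (by simp [hx''])
  · exact hasII_rebuild _ [a, b] hs1 (by
      exact List.Sublist.cons c (List.Sublist.refl _)) hs3 hlen hsort hlet
  · exact hasII_rebuild _ [c, b] hs1 (by
      refine List.Sublist.cons₂ c ?_; exact List.Sublist.cons a (List.Sublist.refl _))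
      hs3 hlen hsort hlet
  · -- s₂ = [a, c, b] impossible: sorted needs c ≤ b
    exfalso
    have : c ≤ b := by
      have := hp.2.1
      simp [List.pairwise_append, List.pairwise_cons] at this
      tauto
    omega

lemma swap1_bwd {u v : List ℕ} {a b c i ℓ : ℕ} (h1 : a ≤ b) (h2 : b < c)
    (h : HasIISubseqL (u ++ c :: a :: b :: v) i ℓ) :
    HasIISubseqL (u ++ a :: c :: b :: v) i ℓ := by
  obtain ⟨s, hsub, hlen, hsort, hlet⟩ := h
  obtain ⟨s₁, s₂₃, rfl, hs1, h23⟩ := List.sublist_append_iff.1 hsub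
  obtain ⟨s₂, s₃, rfl, hs2, hs3⟩ :=
    List.sublist_append_iff.1 (show s₂₃.Sublist ([c, a, b] ++ v) from h23)
  have hp := List.pairwise_append.1 hsort
  have hp2 := List.pairwise_append.1 hp.2.1
  rw [show u ++ a :: c :: b :: v = u ++ ([a, c, b] ++ v) from rfl]
  rcases sublist_triple hs2 with rfl | rfl | rfl | rfl | rfl | rfl | rfl | rfl
  · exact hasII_rebuild _ [] hs1 (by simp) hs3 hlen hsort hlet
  · exact hasII_rebuild _ [c] hs1 (by simp) hs3 hlen hsort hlet
  · exact hasII_rebuild _ [a] hs1 (by simp) hs3 hlen hsort hlet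
  · exact hasII_rebuild _ [b] hs1 (by simp) hs3 hlen hsort hlet
  · -- s₂ = [c, a] impossible
    exfalso
    have : c ≤ a := by have := hp2.1; simp at this; omega
    omega
  · exact hasII_rebuild _ [c, b] hs1
      (List.Sublist.cons a (List.Sublist.refl _)) hs3 hlen hsort hlet
  · exact hasII_rebuild _ [a, b] hs1
      (List.Sublist.cons₂ a (List.Sublist.cons c (List.Sublist.refl _))) hs3 hlen hsort hlet
  · exfalso
    have : c ≤ a := by
      have := hp.2.1
      simp [List.pairwise_append, List.pairwise_cons] at this
      tauto
    omega

lemma swap2_fwd {u v : List ℕ} {a b c i ℓ : ℕ} (h1 : a < b) (h2 : b ≤ c)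
    (h : HasIISubseqL (u ++ b :: a :: c :: v) i ℓ) :
    HasIISubseqL (u ++ b :: c :: a :: v) i ℓ := by
  obtain ⟨s, hsub, hlen, hsort, hlet⟩ := h
  obtain ⟨s₁, s₂₃, rfl, hs1, h23⟩ := List.sublist_append_iff.1 hsub
  obtain ⟨s₂, s₃, rfl, hs2, hs3⟩ :=
    List.sublist_append_iff.1 (show s₂₃.Sublist ([b, a, c] ++ v) from h23)
  have hp := List.pairwise_append.1 hsort
  have hp2 := List.pairwise_append.1 hp.2.1
  rw [show u ++ b :: c :: a :: v = u ++ ([b, c, a] ++ v) from rfl]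
  rcases sublist_triple hs2 with rfl | rfl | rfl | rfl | rfl | rfl | rfl | rfl
  · exact hasII_rebuild _ [] hs1 (by simp) hs3 hlen hsort hlet
  · exact hasII_rebuild _ [b] hs1 (by simp) hs3 hlen hsort hlet
  · exact hasII_rebuild _ [a] hs1 (by simp) hs3 hlen hsort hlet
  · exact hasII_rebuild _ [c] hs1 (by simp) hs3 hlen hsort hlet
  · exfalso
    have : b ≤ a := by have := hp2.1; simp at this; omega
    omega
  · exact hasII_rebuild _ [b, c] hs1
      (List.Sublist.cons₂ b (List.Sublist.cons₂ c (List.nil_sublist _))) hs3 hlen hsort hlet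
  · -- s₂ = [a, c] : replace by [b, c]
    have hai : a = i ∨ a = i + 1 := hlet a (by simp)
    have hci : c = i ∨ c = i + 1 := hlet c (by simp)
    have hbi : b = i + 1 := by omega
    refine hasII_rebuild _ [b, c] hs1
      (List.Sublist.cons₂ b (List.Sublist.cons₂ c (List.nil_sublist _))) hs3
      (by simpa using hlen) ?_ ?_
    · refine List.pairwise_append.2 ⟨hp.1, List.pairwise_append.2 ⟨?_, hp2.2.1, ?_⟩, ?_⟩
      · simp [h2]
      · intro x hx y hy
        rcases List.mem_pair.1 hx with rfl | rfl
        · exact le_trans h2 (hp2.2.2 c (by simp) y hy)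
        · exact hp2.2.2 x (by simp) y hy
      · intro x hx y hy
        rcases List.mem_append.1 hy with hy' | hy'
        · rcases List.mem_pair.1 hy' with rfl | rfl
          · exact le_trans (hp.2.2 x hx a (by simp)) (le_of_lt h1)
          · exact hp.2.2 x hx y (by simp)
        · exact hp.2.2 x hx y (by simp [hy'])
    · intro x hx
      rcases List.mem_append.1 hx with hx' | hx'
      · exact hlet x (by simp [hx'])
      · rcases List.mem_append.1 hx' with hx'' | hx''
        · rcases List.mem_pair.1 hx'' with rfl | rfl
          · right; exact hbi
          · exact hlet x (by simp)
        · exact hlet x (by simp [hx''])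
  · exfalso
    have : b ≤ a := by
      have := hp.2.1
      simp [List.pairwise_append, List.pairwise_cons] at this
      tauto
    omega

lemma swap2_bwd {u v : List ℕ} {a b c i ℓ : ℕ} (h1 : a < b) (h2 : b ≤ c)
    (h : HasIISubseqL (u ++ b :: c :: a :: v) i ℓ) :
    HasIISubseqL (u ++ b :: a :: c :: v) i ℓ := by
  obtain ⟨s, hsub, hlen, hsort, hlet⟩ := h
  obtain ⟨s₁, s₂₃, rfl, hs1, h23⟩ := List.sublist_append_iff.1 hsub
  obtain ⟨s₂, s₃, rfl, hs2, hs3⟩ :=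
    List.sublist_append_iff.1 (show s₂₃.Sublist ([b, c, a] ++ v) from h23)
  have hp := List.pairwise_append.1 hsort
  have hp2 := List.pairwise_append.1 hp.2.1
  rw [show u ++ b :: a :: c :: v = u ++ ([b, a, c] ++ v) from rfl]
  rcases sublist_triple hs2 with rfl | rfl | rfl | rfl | rfl | rfl | rfl | rfl
  · exact hasII_rebuild _ [] hs1 (by simp) hs3 hlen hsort hlet
  · exact hasII_rebuild _ [b] hs1 (by simp) hs3 hlen hsort hlet
  · exact hasII_rebuild _ [c] hs1 (by simp) hs3 hlen hsort hlet
  · exact hasII_rebuild _ [a] hs1 (by simp) hs3 hlen hsort hlet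
  · exact hasII_rebuild _ [b, c] hs1
      (List.Sublist.cons₂ b (List.Sublist.cons a (List.Sublist.refl _))) hs3 hlen hsort hlet
  · exfalso
    have : b ≤ a := by have := hp2.1; simp at this; omega
    omega
  · exfalso
    have : c ≤ a := by have := hp2.1; simp at this; omega
    have : a < c := lt_of_lt_of_le h1 h2
    omega
  · exfalso
    have : c ≤ a := by
      have := hp.2.1
      simp [List.pairwise_append, List.pairwise_cons] at this
      tauto
    have : a < c := lt_of_lt_of_le h1 h2
    omega

lemma knuthStep_hasII_iff {w w' : List ℕ} (h : KnuthStep w w') (i ℓ : ℕ) :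
    HasIISubseqL w i ℓ ↔ HasIISubseqL w' i ℓ := by
  cases h with
  | swap1 u v a b c h1 h2 => exact ⟨swap1_fwd h1 h2, swap1_bwd h1 h2⟩
  | swap2 u v a b c h1 h2 => exact ⟨swap2_fwd h1 h2, swap2_bwd h1 h2⟩

lemma knuthEquiv_hasII_iff {w w' : List ℕ} (h : KnuthEquiv w w') (i ℓ : ℕ) :
    HasIISubseqL w i ℓ ↔ HasIISubseqL w' i ℓ := by
  induction h with
  | rel x y hxy => exact knuthStep_hasII_iff hxy i ℓ
  | refl x => exact Iff.rfl
  | symm x y _ ih => exact ih.symm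
  | trans x y z _ _ ih1 ih2 => exact ih1.trans ih2

lemma getD_set_eq {R : List ℕ} {p x : ℕ} (hp : p < R.length) :
    (R.set p x).getD p 0 = x := by
  rw [List.getD_eq_getElem _ _ (by simpa using hp), List.getElem_set]
  simp

lemma getD_set_ne {R : List ℕ} {p x j : ℕ} (hne : p ≠ j) :
    (R.set p x).getD j 0 = R.getD j 0 := by
  by_cases hj : j < R.length
  · rw [List.getD_eq_getElem _ _ (by simpa using hj), List.getD_eq_getElem _ _ hj,
      List.getElem_set, if_neg hne]
  · rw [List.getD_eq_default _ _ (by simpa using not_lt.1 hj),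
      List.getD_eq_default _ _ (by simpa using not_lt.1 hj)]

lemma isSSYTRows_tail {row : List ℕ} {rest : List (List ℕ)}
    (h : IsSSYTRows (row :: rest)) : IsSSYTRows rest := by
  refine ⟨fun r hr => h.1 r (by simp [hr]), fun i hi => ?_⟩
  have := h.2 (i + 1) (by simpa using hi)
  simpa [List.getD_cons_succ] using this

lemma isSSYTRows_cons {row : List ℕ} {rest : List (List ℕ)}
    (hrow : row ≠ [] ∧ row.Pairwise (· ≤ ·) ∧ ∀ x ∈ row, 0 < x)
    (hrest : IsSSYTRows rest)
    (hif : rest ≠ [] →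
      (rest.getD 0 []).length ≤ row.length ∧
      ∀ j, j < (rest.getD 0 []).length → row.getD j 0 < (rest.getD 0 []).getD j 0) :
    IsSSYTRows (row :: rest) := by
  constructor
  · intro r hr
    rcases List.mem_cons.1 hr with rfl | hr
    · exact hrow
    · exact hrest.1 r hr
  · intro i hi
    cases i with
    | zero =>
      have hne : rest ≠ [] := by
        intro h; subst h; simp at hi
      simpa [List.getD_cons_succ, List.getD_cons_zero] using hif hne
    | succ k =>
      have := hrest.2 k (by simpa using hi)
      simpa [List.getD_cons_succ] using this

lemma tabInsert_ne_nil (y : ℕ) (Q : List (List ℕ)) : tabInsert y Q ≠ [] := by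
  cases Q with
  | nil => simp [tabInsert]
  | cons q Q' =>
    rcases h : rowInsert y q with ⟨row', o⟩
    cases o <;> simp [tabInsert, h]

lemma tabInsert_head (y : ℕ) (Q : List (List ℕ)) (hQ : Q ≠ []) :
    (tabInsert y Q).getD 0 [] = (rowInsert y (Q.getD 0 [])).1 := by
  cases Q with
  | nil => simp at hQ
  | cons q Q' =>
    rcases h : rowInsert y q with ⟨row', o⟩
    cases o <;> simp [tabInsert, h]

lemma tabInsert_interface {rest : List (List ℕ)} {row : List ℕ} {x p : ℕ}
    (hrow : row.Pairwise (· ≤ ·)) (hp : p < row.length)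
    (hkp : ∀ k, k < p → row.getD k 0 ≤ x) (hxp : x < row.getD p 0)
    (hif : rest ≠ [] →
      (rest.getD 0 []).length ≤ row.length ∧
      ∀ j, j < (rest.getD 0 []).length → row.getD j 0 < (rest.getD 0 []).getD j 0) :
    ((tabInsert (row.getD p 0) rest).getD 0 []).length ≤ (row.set p x).length ∧
    ∀ j, j < ((tabInsert (row.getD p 0) rest).getD 0 []).length →
      (row.set p x).getD j 0 < ((tabInsert (row.getD p 0) rest).getD 0 []).getD j 0 := by
  set y := row.getD p 0 with hy
  have hsetlen : (row.set p x).length = row.length := by simp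
  have hsetD : ∀ j, j < row.length → (row.set p x).getD j 0 < y →
      True := fun _ _ _ => trivial
  cases rest with
  | nil =>
    simp only [tabInsert, List.getD_cons_zero]
    constructor
    · simpa [hsetlen] using Nat.one_le_iff_ne_zero.2 (by omega : row.length ≠ 0)
    · intro j hj
      have hj0 : j = 0 := by simpa using hj
      subst hj0
      simp only [List.getD_cons_zero]
      rcases Nat.eq_zero_or_pos p with rfl | hppos
      · rw [getD_set_eq hp]; exact hxp
      · rw [getD_set_ne (by omega)]
        exact lt_of_le_of_lt (hkp 0 hppos) hxp
  | cons row₂ rest₂ =>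
    have hif' := hif (by simp)
    obtain ⟨hlen2, hcol2⟩ := hif'
    simp only [List.getD_cons_zero] at hlen2 hcol2
    rw [tabInsert_head y _ (by simp)]
    simp only [List.getD_cons_zero]
    rcases rowInsert_spec y row₂ with ⟨hall, heq⟩ | ⟨p₂, hp₂, hyp₂, hkp₂, heq⟩
    · -- append case : row₂.length ≤ p
      rw [heq]
      have hmp : row₂.length ≤ p := by
        by_contra hcon
        push_neg at hcon
        have h1 := hcol2 p hcon
        have h2 : row₂.getD p 0 ≤ y := by
          apply hall
          rw [List.getD_eq_getElem _ _ hcon]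
          exact List.getElem_mem _
        omega
      constructor
      · simp only [List.length_append, List.length_singleton, hsetlen]
        omega
      · intro j hj
        simp only [List.length_append, List.length_singleton] at hj
        rcases lt_or_eq_of_le (Nat.lt_succ_iff.1 hj) with hjm | hjm
        · rw [List.getD_append _ _ _ _ hjm, getD_set_ne (by omega)]
          exact hcol2 j hjm
        · subst hjm
          have : (row₂ ++ [y]).getD row₂.length 0 = y := by
            rw [List.getD_eq_getElem _ _ (by simp), List.getElem_append_right (le_refl _)]
            simp
          rw [this]
          rcases eq_or_lt_of_le hmp with hpe | hplt
          · rw [hpe, getD_set_eq hp]; exact hxp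
          · rw [getD_set_ne (by omega)]
            exact lt_of_le_of_lt (hkp _ hplt) hxp
    · -- bump case : p₂ ≤ p
      rw [heq]
      have hp₂p : p₂ ≤ p := by
        by_contra hcon
        push_neg at hcon
        have h1 : row₂.getD p 0 ≤ y := hkp₂ p hcon
        have h2 := hcol2 p (lt_trans hcon hp₂)
        omega
      constructor
      · simp only [List.length_set, hsetlen]
        omega
      · intro j hj
        simp only [List.length_set] at hj
        by_cases hjp₂ : p₂ = j
        · subst hjp₂
          rw [getD_set_eq hp₂]
          rcases eq_or_lt_of_le hp₂p with hpe | hplt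
          · rw [hpe, getD_set_eq hp]; exact hxp
          · rw [getD_set_ne (by omega)]
            exact lt_of_lt_of_le (lt_of_le_of_lt (hkp _ hplt) hxp) (le_refl _)
        · rw [getD_set_ne hjp₂]
          by_cases hjp : p = j
          · subst hjp
            rw [getD_set_eq hp]
            exact lt_trans hxp (hcol2 p hj)
          · rw [getD_set_ne hjp]
            exact hcol2 j hj

lemma tabInsert_isSSYTRows : ∀ (P : List (List ℕ)) (x : ℕ), IsSSYTRows P → 0 < x →
    IsSSYTRows (tabInsert x P) := by
  intro P
  induction P with
  | nil =>
    intro x _ hx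
    refine ⟨?_, ?_⟩
    · intro r hr
      simp only [tabInsert, List.mem_singleton] at hr
      subst hr
      exact ⟨by simp, by simp, by simpa using hx⟩
    · intro i hi
      simp [tabInsert] at hi
  | cons row rest ih =>
    intro x hP hx
    have hrow := hP.1 row (by simp)
    have hrest := isSSYTRows_tail hP
    have hif : rest ≠ [] →
        (rest.getD 0 []).length ≤ row.length ∧
        ∀ j, j < (rest.getD 0 []).length → row.getD j 0 < (rest.getD 0 []).getD j 0 := by
      intro hne
      have hlen : 1 < (row :: rest).length := by
        cases rest with
        | nil => simp at hne
        | cons a b => simp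
      have := hP.2 0 (by simpa using hlen)
      simpa using this
    rcases rowInsert_spec x row with ⟨hall, heq⟩ | ⟨p, hp, hxp, hkp, heq⟩
    · -- no bump
      rw [show tabInsert x (row :: rest) = (row ++ [x]) :: rest by
        rw [tabInsert, heq]]
      refine isSSYTRows_cons ⟨by simp, ?_, ?_⟩ hrest ?_
      · have := rowInsert_fst_sorted hrow.2.1 x
        rwa [heq] at this
      · intro z hz
        rcases List.mem_append.1 hz with hz | hz
        · exact hrow.2.2 z hz
        · simp only [List.mem_singleton] at hz; omega
      · intro hne
        obtain ⟨h1, h2⟩ := hif hne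
        refine ⟨?_, fun j hj => ?_⟩
        · simp only [List.length_append, List.length_singleton]
          omega
        rw [List.getD_append _ _ _ _ (lt_of_lt_of_le hj h1)]
        exact h2 j hj
    · -- bump y = row.getD p 0
      rw [show tabInsert x (row :: rest) = (row.set p x) :: tabInsert (row.getD p 0) rest by
        rw [tabInsert, heq]]
      have hy : 0 < row.getD p 0 := by
        apply hrow.2.2
        rw [List.getD_eq_getElem _ _ hp]
        exact List.getElem_mem _
      refine isSSYTRows_cons ⟨?_, ?_, ?_⟩ (ih _ hrest hy) ?_
      · intro hcon
        have hlen : (row.set p x).length = row.length := by simp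
        rw [hcon] at hlen
        simp at hlen
        omega
      · have := rowInsert_fst_sorted hrow.2.1 x
        rwa [heq] at this
      · intro z hz
        rcases List.mem_or_eq_of_mem_set hz with hz | rfl
        · exact hrow.2.2 z hz
        · exact hx
      · intro _
        exact tabInsert_interface hrow.2.1 hp hkp hxp hif

lemma insertTab_isSSYTRows (w : List ℕ) (hw : ∀ z ∈ w, 0 < z) : IsSSYTRows (insertTab w) := by
  induction w using List.reverseRecOn with
  | nil => exact ⟨by simp [insertTab], by simp [insertTab]⟩
  | append_singleton w x ih =>
    rw [show insertTab (w ++ [x]) = tabInsert x (insertTab w) by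
      rw [insertTab, List.foldl_append]; rfl]
    exact tabInsert_isSSYTRows _ x (ih (fun z hz => hw z (by simp [hz])))
      (hw x (by simp))

def posOf (P : List (List ℕ)) (r c : ℕ) : ℕ := (readingWord (P.drop (r + 1))).length + c

lemma posOf_spec : ∀ (P : List (List ℕ)) (r c : ℕ), r < P.length →
    c < (P.getD r []).length →
    posOf P r c < (readingWord P).length ∧
      (readingWord P).getD (posOf P r c) 0 = (P.getD r []).getD c 0 := by
  intro P
  induction P with
  | nil => intro r c hr _; simp at hr
  | cons row rest ih =>
    intro r c hr hc
    cases r with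
    | zero =>
      simp only [List.getD_cons_zero] at hc ⊢
      have hpos : posOf (row :: rest) 0 c = (readingWord rest).length + c := by
        simp [posOf]
      rw [hpos, readingWord_cons]
      constructor
      · simp only [List.length_append]; omega
      · rw [List.getD_eq_getElem _ _ (by simp; omega),
          List.getElem_append_right (by omega)]
        simp only [Nat.add_sub_cancel_left]
        rw [List.getD_eq_getElem _ _ hc]
    | succ r' =>
      simp only [List.getD_cons_succ] at hc ⊢
      have hr' : r' < rest.length := by simpa using hr
      have hpos : posOf (row :: rest) (r' + 1) c = posOf rest r' c := by
        simp [posOf, List.drop_succ_cons]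
      rw [hpos, readingWord_cons]
      obtain ⟨h1, h2⟩ := ih r' c hr' hc
      constructor
      · simp only [List.length_append]; omega
      · rw [List.getD_eq_getElem _ _ (by simp; omega),
          List.getElem_append_left h1, ← List.getD_eq_getElem _ 0 h1, h2]

lemma readingWord_drop_len_anti (P : List (List ℕ)) :
    ∀ k, (readingWord (P.drop (k + 1))).length ≤ (readingWord (P.drop k)).length := by
  intro k
  by_cases hk : k < P.length
  · rw [List.drop_eq_getElem_cons hk, readingWord_cons]
    simp
  · rw [List.drop_eq_nil_of_le (by omega), List.drop_eq_nil_of_le (by omega)]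

lemma readingWord_drop_mono (P : List (List ℕ)) {a b : ℕ} (hab : a ≤ b) :
    (readingWord (P.drop b)).length ≤ (readingWord (P.drop a)).length := by
  induction b with
  | zero => simp_all
  | succ n ihn =>
    rcases Nat.lt_succ_iff_lt_or_eq.1 (Nat.lt_succ_of_le hab) with h | rfl
    · exact le_trans (readingWord_drop_len_anti P n) (ihn (by omega))
    · exact le_refl _

lemma posOf_strict {P : List (List ℕ)} {r c r' c' : ℕ} (hr : r < P.length)
    (hc : c < (P.getD r []).length)
    (h : r' < r ∨ (r' = r ∧ c < c')) : posOf P r c < posOf P r' c' := by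
  rcases h with h | ⟨rfl, h⟩
  · have hdrop : (readingWord (P.drop (r + 1))).length + (P.getD r []).length =
        (readingWord (P.drop r)).length := by
      rw [List.drop_eq_getElem_cons hr, readingWord_cons]
      simp only [List.length_append]
      rw [List.getD_eq_getElem _ _ hr]
    have hmono := readingWord_drop_mono P (show r' + 1 ≤ r from h)
    simp only [posOf]
    omega
  · simp only [posOf]
    omega

lemma posOf_decomp : ∀ (P : List (List ℕ)) (p : ℕ), p < (readingWord P).length →
    ∃ r c, r < P.length ∧ c < (P.getD r []).length ∧ p = posOf P r c := by
  intro P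
  induction P with
  | nil => intro p hp; simp [readingWord] at hp
  | cons row rest ih =>
    intro p hp
    rw [readingWord_cons] at hp
    simp only [List.length_append] at hp
    by_cases hsmall : p < (readingWord rest).length
    · obtain ⟨r, c, hr, hc, hpos⟩ := ih p hsmall
      exact ⟨r + 1, c, by simpa using hr, by simpa using hc,
        by rw [hpos]; simp [posOf, List.drop_succ_cons]⟩
    · refine ⟨0, p - (readingWord rest).length, by simp, by simp; omega, ?_⟩
      simp only [posOf, List.drop_succ_cons, List.drop_zero]
      omega

lemma rows_len_anti {P : List (List ℕ)} (h : IsSSYTRows P) :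
    ∀ r, r < P.length → ∀ r', r' ≤ r → (P.getD r []).length ≤ (P.getD r' []).length := by
  intro r
  induction r with
  | zero =>
    intro _ r' hr'
    have : r' = 0 := by omega
    simp [this]
  | succ k ihk =>
    intro hkP r' hr'
    rcases Nat.lt_succ_iff_lt_or_eq.1 (Nat.lt_succ_of_le hr') with h' | rfl
    · exact le_trans (h.2 k hkP).1 (ihk (by omega) r' (by omega))
    · exact le_refl _

lemma col_strict {P : List (List ℕ)} (h : IsSSYTRows P) :
    ∀ r, r < P.length → ∀ r', r' < r → ∀ c, c < (P.getD r []).length →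
      (P.getD r' []).getD c 0 < (P.getD r []).getD c 0 := by
  intro r
  induction r with
  | zero => intro _ r' hr'; omega
  | succ k ihk =>
    intro hkP r' hr' c hc
    have hstep : (P.getD k []).getD c 0 < (P.getD (k + 1) []).getD c 0 :=
      (h.2 k hkP).2 c hc
    rcases Nat.lt_succ_iff_lt_or_eq.1 hr' with h' | rfl
    · have hck : c < (P.getD k []).length :=
        lt_of_lt_of_le hc (rows_len_anti h (k + 1) hkP k (by omega))
      exact lt_trans (ihk (by omega) r' h' c hck) hstep
    · exact hstep

lemma tabFun_ne_zero_iff {P : List (List ℕ)} (h : IsSSYTRows P) (r c : ℕ) :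
    tabFun P r c ≠ 0 ↔ r < P.length ∧ c < (P.getD r []).length := by
  constructor
  · intro hne
    by_cases hr : r < P.length
    · refine ⟨hr, ?_⟩
      by_contra hc
      rw [show tabFun P r c = (P.getD r []).getD c 0 from rfl,
        List.getD_eq_default _ _ (by omega)] at hne
      exact hne rfl
    · exfalso
      rw [show tabFun P r c = (P.getD r []).getD c 0 from rfl,
        List.getD_eq_default P [] (by omega : P.length ≤ r)] at hne
      simp at hne
  · rintro ⟨hr, hc⟩
    have hmem : P.getD r [] ∈ P := by
      rw [List.getD_eq_getElem _ _ hr]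
      exact List.getElem_mem _
    have hpos := (h.1 _ hmem).2.2
    have : 0 < (P.getD r []).getD c 0 := by
      apply hpos
      rw [List.getD_eq_getElem _ _ hc]
      exact List.getElem_mem _
    simp only [tabFun]
    omega

lemma strictmono_fin_fix {n : ℕ} {C : Fin n → ℕ}
    (hmono : ∀ a b : Fin n, (a : ℕ) < (b : ℕ) → C a < C b) (hb : ∀ a, C a < n) :
    ∀ a : Fin n, C a = (a : ℕ) := by
  have hlow : ∀ m (hm : m < n), m ≤ C ⟨m, hm⟩ := by
    intro m
    induction m with
    | zero => intro _; omega
    | succ k ihk =>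
      intro hm
      have h1 := ihk (by omega)
      have h2 := hmono ⟨k, by omega⟩ ⟨k + 1, hm⟩ (by simp)
      omega
  have hstep : ∀ t m (hm : m + t < n), C ⟨m, by omega⟩ + t ≤ C ⟨m + t, hm⟩ := by
    intro t
    induction t with
    | zero => intro m hm; simp
    | succ k ihk =>
      intro m hm
      have h1 := ihk m (by omega)
      have h2 := hmono ⟨m + k, by omega⟩ ⟨m + (k + 1), by omega⟩ (by simp)
      omega
  intro a
  have h1 := hlow a a.2
  have h2 : C ⟨(a : ℕ), a.2⟩ + (n - 1 - (a : ℕ)) ≤ C ⟨(a : ℕ) + (n - 1 - (a : ℕ)), by omega⟩ :=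
    hstep (n - 1 - (a : ℕ)) (a : ℕ) (by omega)
  have h3 := hb ⟨(a : ℕ) + (n - 1 - (a : ℕ)), by omega⟩
  have ha : (⟨(a : ℕ), a.2⟩ : Fin n) = a := rfl
  rw [ha] at h1 h2
  omega

lemma strip_to_subseq {P : List (List ℕ)} (hP : IsSSYTRows P) {i : ℕ} (hi : 1 ≤ i)
    (h : HasIStrip (tabFun P) i ((P.getD 0 []).length)) :
    HasIISubseqL (readingWord P) i ((P.getD 0 []).length) := by
  set L := (P.getD 0 []).length with hL
  obtain ⟨s, h1, h2, h3, h4⟩ := h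
  have hvalid : ∀ j, j < L → s j < P.length ∧ j < (P.getD (s j) []).length :=
    fun j hj => (tabFun_ne_zero_iff hP (s j) j).1 (h1 j hj)
  set g : Fin L → ℕ := fun j => tabFun P (s (j : ℕ)) (j : ℕ) with hg
  refine ⟨List.ofFn g, ?_, by simp, ?_, ?_⟩
  · rw [List.sublist_iff_exists_fin_orderEmbedding_get_eq]
    have hbound : ∀ ix : Fin (List.ofFn g).length,
        posOf P (s (ix : ℕ)) (ix : ℕ) < (readingWord P).length := by
      intro ix
      have hix : (ix : ℕ) < L := by simpa using ix.2
      exact (posOf_spec P _ _ (hvalid _ hix).1 (hvalid _ hix).2).1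
    set F : Fin (List.ofFn g).length → Fin (readingWord P).length :=
      fun ix => ⟨posOf P (s (ix : ℕ)) (ix : ℕ), hbound ix⟩ with hF
    have hmono : StrictMono F := by
      intro a b hab
      have ha : (a : ℕ) < L := by simpa using a.2
      have hb : (b : ℕ) < L := by simpa using b.2
      have hab' : (a : ℕ) < (b : ℕ) := hab
      have hr : s (b : ℕ) ≤ s (a : ℕ) := h2 _ _ hab' hb
      have : posOf P (s (a : ℕ)) (a : ℕ) < posOf P (s (b : ℕ)) (b : ℕ) := by
        apply posOf_strict (hvalid _ ha).1 (hvalid _ ha).2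
        rcases lt_or_eq_of_le hr with h' | h'
        · exact Or.inl h'
        · exact Or.inr ⟨h', hab'⟩
      exact this
    refine ⟨OrderEmbedding.ofStrictMono F hmono, ?_⟩
    intro ix
    have hix : (ix : ℕ) < L := by simpa using ix.2
    have hspec := posOf_spec P _ _ (hvalid _ hix).1 (hvalid _ hix).2
    rw [List.get_ofFn]
    simp only [OrderEmbedding.coe_ofStrictMono]
    rw [show (readingWord P).get (F ix) = (readingWord P).getD ((F ix) : ℕ) 0 by
      rw [List.getD_eq_getElem _ _ (F ix).2]; rfl]
    simp only [hF]
    rw [hspec.2]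
    rfl
  · -- sorted
    rw [List.pairwise_ofFn]
    intro a b hab
    have ha : (a : ℕ) < L := by simpa using a.2
    have hb : (b : ℕ) < L := by simpa using b.2
    rcases h3 _ ha with hga | hga <;> rcases h3 _ hb with hgb | hgb <;>
      simp only [hg, hga, hgb]
    · exact le_refl _
    · omega
    · exfalso
      have := h4 _ _ hb ha hgb hga
      omega
    · exact le_refl _
  · intro x hx
    rw [List.mem_ofFn] at hx
    obtain ⟨j, rfl⟩ := hx
    exact h3 _ (by simpa using j.2)

lemma subseq_to_strip {P : List (List ℕ)} (hP : IsSSYTRows P) {i : ℕ} (hi : 1 ≤ i)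
    (h : HasIISubseqL (readingWord P) i ((P.getD 0 []).length)) :
    HasIStrip (tabFun P) i ((P.getD 0 []).length) := by
  set L := (P.getD 0 []).length with hL
  obtain ⟨s, hsub, hlen, hsort, hlet⟩ := h
  obtain ⟨f, hf⟩ := List.sublist_iff_exists_fin_orderEmbedding_get_eq.1 hsub
  have hdec : ∀ ix : Fin s.length, ∃ r c, r < P.length ∧ c < (P.getD r []).length ∧
      ((f ix) : ℕ) = posOf P r c := fun ix => posOf_decomp P _ (f ix).2
  choose R C hR hC hpos using hdec
  have hval : ∀ ix : Fin s.length, s.get ix = (P.getD (R ix) []).getD (C ix) 0 := by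
    intro ix
    have hspec := posOf_spec P _ _ (hR ix) (hC ix)
    rw [hf ix, show (readingWord P).get (f ix) = (readingWord P).getD ((f ix) : ℕ) 0 by
      rw [List.getD_eq_getElem _ _ (f ix).2]; rfl, hpos ix, hspec.2]
  have hRanti : ∀ a b : Fin s.length, (a : ℕ) < (b : ℕ) → R b ≤ R a := by
    intro a b hab
    by_contra hcon
    push_neg at hcon
    have : posOf P (R b) (C b) < posOf P (R a) (C a) :=
      posOf_strict (hR b) (hC b) (Or.inl hcon)
    have hfab : (f a : ℕ) < (f b : ℕ) := f.strictMono (show a < b from hab)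
    rw [hpos a, hpos b] at hfab
    omega
  have hCmono : ∀ a b : Fin s.length, (a : ℕ) < (b : ℕ) → C a < C b := by
    intro a b hab
    have hfab : (f a : ℕ) < (f b : ℕ) := f.strictMono (show a < b from hab)
    rw [hpos a, hpos b] at hfab
    rcases lt_or_eq_of_le (hRanti a b hab) with hr | hr
    · by_contra hcon
      push_neg at hcon
      have hCa : C a < (P.getD (R b) []).length :=
        lt_of_lt_of_le (hC a) (rows_len_anti hP (R a) (hR a) (R b) (le_of_lt hr))
      have hv1 : (P.getD (R b) []).getD (C b) 0 ≤ (P.getD (R b) []).getD (C a) 0 := by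
        apply sorted_getD_mono ?_ hcon hCa
        have hmem : P.getD (R b) [] ∈ P := by
          rw [List.getD_eq_getElem _ _ (hR b)]; exact List.getElem_mem _
        exact (hP.1 _ hmem).2.1
      have hv2 : (P.getD (R b) []).getD (C a) 0 < (P.getD (R a) []).getD (C a) 0 :=
        col_strict hP (R a) (hR a) (R b) hr (C a) (hC a)
      have hs : s.get a ≤ s.get b := List.Pairwise.rel_get_of_lt hsort (show a < b from hab)
      rw [hval a, hval b] at hs
      omega
    · -- same row: positions differ by column
      simp only [posOf, hr] at hfab
      omega
  have hCb : ∀ ix : Fin s.length, C ix < s.length := by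
    intro ix
    have : C ix < (P.getD 0 []).length :=
      lt_of_lt_of_le (hC ix) (rows_len_anti hP (R ix) (hR ix) 0 (Nat.zero_le _))
    omega
  have hCfix : ∀ ix : Fin s.length, C ix = (ix : ℕ) := strictmono_fin_fix hCmono hCb
  refine ⟨fun j => if hj : j < s.length then R ⟨j, hj⟩ else 0, ?_, ?_, ?_, ?_⟩
  · intro j hj
    have hj' : j < s.length := by omega
    dsimp only
    rw [dif_pos hj']
    have hkey : s.get ⟨j, hj'⟩ = (P.getD (R ⟨j, hj'⟩) []).getD j 0 := by
      have := hval ⟨j, hj'⟩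
      rwa [hCfix ⟨j, hj'⟩] at this
    rw [show tabFun P (R ⟨j, hj'⟩) j = (P.getD (R ⟨j, hj'⟩) []).getD j 0 from rfl, ← hkey]
    have := hlet (s.get ⟨j, hj'⟩) (List.get_mem _ _)
    omega
  · intro j j' hjj' hj'
    have hj'1 : j' < s.length := by omega
    have hj1 : j < s.length := by omega
    dsimp only
    rw [dif_pos hj'1, dif_pos hj1]
    exact hRanti ⟨j, hj1⟩ ⟨j', hj'1⟩ hjj'
  · intro j hj
    have hj' : j < s.length := by omega
    dsimp only
    rw [dif_pos hj']
    have hkey : s.get ⟨j, hj'⟩ = (P.getD (R ⟨j, hj'⟩) []).getD j 0 := by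
      have := hval ⟨j, hj'⟩
      rwa [hCfix ⟨j, hj'⟩] at this
    rw [show tabFun P (R ⟨j, hj'⟩) j = (P.getD (R ⟨j, hj'⟩) []).getD j 0 from rfl, ← hkey]
    exact hlet (s.get ⟨j, hj'⟩) (List.get_mem _ _)
  · intro j j' hj hj' hvi hvi'
    have hj1 : j < s.length := by omega
    have hj'1 : j' < s.length := by omega
    dsimp only at hvi hvi'
    rw [dif_pos hj1] at hvi
    rw [dif_pos hj'1] at hvi'
    have hkey : s.get ⟨j, hj1⟩ = (P.getD (R ⟨j, hj1⟩) []).getD j 0 := by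
      have := hval ⟨j, hj1⟩
      rwa [hCfix ⟨j, hj1⟩] at this
    have hkey' : s.get ⟨j', hj'1⟩ = (P.getD (R ⟨j', hj'1⟩) []).getD j' 0 := by
      have := hval ⟨j', hj'1⟩
      rwa [hCfix ⟨j', hj'1⟩] at this
    rw [show tabFun P (R ⟨j, hj1⟩) j = (P.getD (R ⟨j, hj1⟩) []).getD j 0 from rfl,
      ← hkey] at hvi
    rw [show tabFun P (R ⟨j', hj'1⟩) j' = (P.getD (R ⟨j', hj'1⟩) []).getD j' 0 from rfl,
      ← hkey'] at hvi'
    by_contra hcon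
    push_neg at hcon
    rcases lt_or_eq_of_le hcon with h' | h'
    · have := List.Pairwise.rel_get_of_lt hsort (show (⟨j', hj'1⟩ : Fin s.length) < ⟨j, hj1⟩ from h')
      omega
    · have heq : (⟨j, hj1⟩ : Fin s.length) = ⟨j', hj'1⟩ := Fin.ext h'.symm
      rw [heq] at hvi
      omega

/-- Let `P` be the insertion tableau of a word `ω` of positive
integers under RSK, of shape `λ`.  For every `i ≥ 1`, `P` has an `(i,i+1)`-strip of
length `λ₁` if and only if `ω` has an `(i,i+1)`-subsequence of length `λ₁`. -/
theorem insertTab_strip_iff_subseq (ω : List ℕ) (hω : ∀ x ∈ ω, 0 < x) (i : ℕ)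
    (hi : 1 ≤ i) :
    HasIStrip (tabFun (insertTab ω)) i ((insertTab ω).getD 0 []).length ↔
      HasIISubseqL ω i ((insertTab ω).getD 0 []).length := by
  have hP := insertTab_isSSYTRows ω hω
  have hK := knuth_insertTab ω
  constructor
  · intro h
    exact (knuthEquiv_hasII_iff hK i _).2 (strip_to_subseq hP hi h)
  · intro h
    exact subseq_to_strip hP hi ((knuthEquiv_hasII_iff hK i _).1 h)
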